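/- arXiv:1906.05100 — 2 statements merged into one kernel-verified Lean document; each statement's English description precedes it below -/
import Mathlib

section
/- Let Γ be an (n,d,λ)-graph, let q ≥ 1 and r ≥ 1 be integers, and let H be the graph consisting of an edge-disjoint cycle C_{2q} and cycle C_{2r+1} sharing exactly one vertex. Then | h_H(Γ) − (d^{2r+1}/n)·h_{C_{2q}}(Γ) | ≤ λ · h_{C_{2(q+r)}}(Γ). -/
/-!
Write `A` for the adjacency matrix of `Γ`. Homomorphisms from a cycle `C_m` rooted at `v` are
closed walks of length `m` at `v`, so `h_{C_m}(Γ) = tr A^m`, and a homomorphism of the glued graph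
is a pair of closed walks at a common vertex, so `h_H(Γ) = ∑_v (A^{2q})_{vv} (A^{2r+1})_{vv}`.
Expanding in an orthonormal eigenbasis, `(A^m)_{vv} = ∑_i μ_i^m u_i(v)^2`. When `λ < d`, the
eigenvector for `d` is the normalised constant vector, so the top term of `(A^{2r+1})_{vv}` is
exactly `d^{2r+1}/n` and the others are bounded by `λ (A^{2r})_{vv}`; when `λ ≥ d` both
`(A^{2r+1})_{vv}` and `d^{2r+1}/n` lie in `[0, λ (A^{2r})_{vv}]` (Cauchy–Schwarz for the latter).
Summing against `(A^{2q})_{vv}` and using `(A^{2q})_{vv} (A^{2r})_{vv} ≤ (A^{2q+2r})_{vv}` gives the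
estimate.
-/

open Finset SimpleGraph

/-- `Γ` is an `(n,d,λ)`-graph on its vertex type `V` (with `n = Fintype.card V` as a
separate hypothesis): `Γ` is `d`-regular and all eigenvalues of its adjacency matrix,
except one eigenvalue equal to `d`, have absolute value at most `lam`. -/
def IsNDLGraph {V : Type} [Fintype V] [DecidableEq V] (Γ : SimpleGraph V)
    [DecidableRel Γ.Adj] (d : ℕ) (lam : ℝ) : Prop :=
  Γ.IsRegularOfDegree d ∧
    ∃ (hA : (Γ.adjMatrix ℝ).IsHermitian) (i₀ : V),
      hA.eigenvalues i₀ = d ∧ ∀ i : V, i ≠ i₀ → |hA.eigenvalues i| ≤ lam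

/-- `h_H(G)`: the number of homomorphisms from `H` to `G`. -/
noncomputable def homCount {W V : Type} (H : SimpleGraph W) (G : SimpleGraph V) : ℕ :=
  Nat.card (H →g G)

/-- Relabelling of the vertices of the second cycle: the cycle `C_{2r+1}` uses the vertices
`0, 2q, 2q+1, …, 2q+2r-1` (sharing only the vertex `0` with the first cycle `C_{2q}`). -/
def embC (q i : ℕ) : ℕ := if i = 0 then 0 else 2 * q + i - 1

/-- The graph consisting of an edge-disjoint cycle `C_{2q}` (on the vertices `0,…,2q-1`) and an
odd cycle `C_{2r+1}` (on the vertices `0, 2q, …, 2q+2r-1`) sharing exactly the vertex `0`. -/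
def gluedCycles (q r : ℕ) : SimpleGraph (Fin (2 * q + 2 * r)) :=
  SimpleGraph.fromRel (fun a b =>
    (∃ i : ℕ, i < 2 * q ∧ a.val = i ∧ b.val = (i + 1) % (2 * q)) ∨
    (∃ i : ℕ, i < 2 * r + 1 ∧ a.val = embC q i ∧ b.val = embC q ((i + 1) % (2 * r + 1))))

open Matrix

theorem Fin.val_add_one_eq_mod {n : ℕ} [NeZero n] (i : Fin n) :
    (i + 1 : Fin n).val = (i + 1) % n := by
  rw [Fin.val_add, Fin.val_one', Nat.add_mod_mod]

theorem Fin.ne_add_one {n : ℕ} [NeZero n] (hn : 2 ≤ n) (i : Fin n) : i ≠ i + 1 := by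
  simp only [ne_eq, left_eq_add, Fin.one_eq_zero_iff]
  omega

theorem Finset.card_filter_and_eq_sum_mul {α β γ : Type*} [Fintype α] [Fintype β] [Fintype γ]
    [DecidableEq γ] (P : α → Prop) (Q : β → Prop) [DecidablePred P] [DecidablePred Q]
    (a : α → γ) (b : β → γ) :
    #{p : α × β | P p.1 ∧ Q p.2 ∧ a p.1 = b p.2} =
      ∑ c, #{x | P x ∧ a x = c} * #{y | Q y ∧ b y = c} := by
  rw [card_eq_sum_card_fiberwise (f := fun p => a p.1) (t := univ) (by simp)]
  refine sum_congr rfl fun c _ => ?_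
  rw [← card_product, filter_filter]
  congr 1
  ext ⟨x, y⟩
  simp only [mem_filter, mem_univ, true_and, mem_product]
  grind

theorem abs_sum_pow_odd_mul_le {ι : Type*} (s : Finset ι) (μ w : ι → ℝ) {lam : ℝ}
    (hμ : ∀ i ∈ s, |μ i| ≤ lam) (hw : ∀ i ∈ s, 0 ≤ w i) (r : ℕ) :
    |∑ i ∈ s, μ i ^ (2 * r + 1) * w i| ≤ lam * ∑ i ∈ s, μ i ^ (2 * r) * w i := by
  refine (abs_sum_le_sum_abs _ _).trans ?_
  rw [mul_sum]
  refine sum_le_sum fun i hi => ?_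
  calc |μ i ^ (2 * r + 1) * w i| = |μ i| * (μ i ^ (2 * r) * w i) := by
        rw [abs_mul, abs_pow, pow_succ', (even_two_mul r).pow_abs, abs_of_nonneg (hw i hi)]
        ring
    _ ≤ lam * (μ i ^ (2 * r) * w i) :=
        mul_le_mul_of_nonneg_right (hμ i hi)
          (mul_nonneg ((even_two_mul r).pow_nonneg _) (hw i hi))

theorem abs_sum_mul_sub_mul_sum_le {ι : Type*} (s : Finset ι) {a b e f : ι → ℝ} {c lam : ℝ}
    (hlam : 0 ≤ lam) (ha : ∀ i ∈ s, 0 ≤ a i) (hb : ∀ i ∈ s, |b i - c| ≤ lam * e i)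
    (hf : ∀ i ∈ s, a i * e i ≤ f i) :
    |∑ i ∈ s, a i * b i - c * ∑ i ∈ s, a i| ≤ lam * ∑ i ∈ s, f i := by
  rw [mul_sum, ← sum_sub_distrib, mul_sum]
  refine (abs_sum_le_sum_abs _ _).trans (sum_le_sum fun i hi => ?_)
  calc |a i * b i - c * a i| = a i * |b i - c| := by
        rw [← abs_of_nonneg (ha i hi), ← abs_mul, abs_of_nonneg (ha i hi), mul_sub, mul_comm c]
    _ ≤ a i * (lam * e i) := mul_le_mul_of_nonneg_left (hb i hi) (ha i hi)
    _ ≤ lam * f i := by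
        rw [mul_left_comm]
        exact mul_le_mul_of_nonneg_left (hf i hi) hlam

theorem Matrix.apply_self_mul_apply_self_le {n : Type*} [Fintype n] {M N : Matrix n n ℝ}
    (hM : ∀ i j, 0 ≤ M i j) (hN : ∀ i j, 0 ≤ N i j) (v : n) :
    M v v * N v v ≤ (M * N) v v :=
  single_le_sum (f := fun u => M v u * N u v) (fun u _ => mul_nonneg (hM v u) (hN u v))
    (mem_univ v)

namespace Matrix.IsHermitian

variable {n : Type*} [Fintype n] [DecidableEq n] {A : Matrix n n ℝ} (hA : A.IsHermitian)

theorem pow_eq_eigenvectorUnitary_mul_diagonal_mul (m : ℕ) :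
    A ^ m = (hA.eigenvectorUnitary : Matrix n n ℝ) * diagonal (hA.eigenvalues ^ m) *
      star (hA.eigenvectorUnitary : Matrix n n ℝ) := by
  conv_lhs => rw [hA.spectral_theorem]
  rw [← map_pow, diagonal_pow, Unitary.conjStarAlgAut_apply, RCLike.ofReal_real_eq_id,
    Function.id_comp]

theorem pow_apply_self (m : ℕ) (v : n) :
    (A ^ m) v v = ∑ i, hA.eigenvalues i ^ m * hA.eigenvectorUnitary v i ^ 2 := by
  rw [hA.pow_eq_eigenvectorUnitary_mul_diagonal_mul, mul_apply]
  refine sum_congr rfl fun i _ => ?_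
  rw [mul_diagonal, star_apply, star_trivial, Pi.pow_apply]
  ring

theorem sum_eigenvectorUnitary_apply_sq (i : n) : ∑ v, hA.eigenvectorUnitary v i ^ 2 = 1 := by
  simpa [mul_apply, sq] using
    congrFun (congrFun (Unitary.coe_star_mul_self hA.eigenvectorUnitary) i) i

theorem star_eigenvectorUnitary_mul :
    star (hA.eigenvectorUnitary : Matrix n n ℝ) * A =
      diagonal hA.eigenvalues * star (hA.eigenvectorUnitary : Matrix n n ℝ) := by
  have h := hA.pow_eq_eigenvectorUnitary_mul_diagonal_mul 1
  rw [pow_one, pow_one] at h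
  calc _ = star (hA.eigenvectorUnitary : Matrix n n ℝ) * (hA.eigenvectorUnitary *
      diagonal hA.eigenvalues * star (hA.eigenvectorUnitary : Matrix n n ℝ)) := congrArg _ h
    _ = _ := by simp [← mul_assoc]

/-- The coordinates `c = Uᴴ 1` of the constant vector vanish off `i₀`, so `1 = c i₀ • U_{·,i₀}`. -/
theorem eigenvectorUnitary_apply_sq_of_mulVec_one {d : ℝ} (hd : A *ᵥ 1 = d • 1) {i₀ : n}
    (hne : ∀ i ≠ i₀, hA.eigenvalues i ≠ d) (v : n) :
    hA.eigenvectorUnitary v i₀ ^ 2 = (Fintype.card n : ℝ)⁻¹ := by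
  set U : Matrix n n ℝ := ↑hA.eigenvectorUnitary
  set c := star U *ᵥ 1
  have hc : ∀ i ≠ i₀, c i = 0 := by
    intro i hi
    have h := congrFun (congrArg (· *ᵥ (1 : n → ℝ)) hA.star_eigenvectorUnitary_mul) i
    simp only [← mulVec_mulVec, hd, mulVec_smul, mulVec_diagonal, Pi.smul_apply,
      smul_eq_mul] at h
    exact (mul_eq_mul_right_iff.1 h.symm).resolve_left (hne i hi)
  have hUc : ∀ v, U v i₀ * c i₀ = 1 := by
    intro v
    have h := congrFun (show U *ᵥ c = 1 by
      rw [mulVec_mulVec, Unitary.mul_star_self_of_mem hA.eigenvectorUnitary.2, one_mulVec]) v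
    rwa [mulVec, dotProduct, sum_eq_single i₀ (fun i _ hi => by rw [hc i hi, mul_zero])
      (by simp)] at h
  have hcard : c i₀ ^ 2 = Fintype.card n := by
    have hcol : ∑ v, U v i₀ ^ 2 = 1 := hA.sum_eigenvectorUnitary_apply_sq i₀
    calc c i₀ ^ 2 = (∑ v, U v i₀ ^ 2) * c i₀ ^ 2 := by rw [hcol, one_mul]
      _ = (Fintype.card n : ℝ) := by simp [sum_mul, ← mul_pow, hUc]
  rw [← hcard, ← one_div, eq_div_iff (pow_ne_zero 2 fun h => by simpa [h] using hUc v),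
    ← mul_pow, hUc, one_pow]

end Matrix.IsHermitian

namespace SimpleGraph

section IsCyclicWalk

variable {V : Type*} (G : SimpleGraph V)

/-- `f` traces the closed walk `f 0 ~ f 1 ~ ⋯ ~ f (m - 1) ~ f 0`. -/
def IsCyclicWalk {m : ℕ} [NeZero m] (f : Fin m → V) : Prop :=
  ∀ i, G.Adj (f i) (f (i + 1))

instance [DecidableRel G.Adj] {m : ℕ} [NeZero m] : DecidablePred (G.IsCyclicWalk (m := m)) :=
  fun _ => inferInstanceAs (Decidable (∀ _, _))

def cycleGraphHomEquiv (n : ℕ) :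
    (cycleGraph (n + 2) →g G) ≃ {f : Fin (n + 2) → V // G.IsCyclicWalk f} where
  toFun φ := ⟨φ, fun i => φ.map_rel (Or.inr (add_sub_cancel_left i 1))⟩
  invFun f := ⟨f, fun {a b} hab => by
    obtain h | h := hab <;> rw [sub_eq_iff_eq_add'] at h <;> subst h
    · exact (f.2 b).symm
    · exact f.2 a⟩

end IsCyclicWalk

variable {V : Type*} [Fintype V] [DecidableEq V] (G : SimpleGraph V) [DecidableRel G.Adj]

/-- Walks `f 0 = u ~ f 1 ~ ⋯ ~ f n ~ w` of length `n + 1`, recorded without their last vertex. -/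
def walkSeqs (n : ℕ) (u w : V) : Finset (Fin (n + 1) → V) :=
  {f | f 0 = u ∧ (∀ i : Fin n, G.Adj (f i.castSucc) (f i.succ)) ∧ G.Adj (f (Fin.last n)) w}

theorem walkSeqs_zero (u w : V) :
    G.walkSeqs 0 u w = if G.Adj u w then {fun _ => u} else ∅ := by
  ext f
  split_ifs with h
  · simpa [walkSeqs, funext_iff, Fin.forall_fin_one] using fun hf => hf ▸ h
  · simpa [walkSeqs] using fun hf => hf ▸ h

theorem filter_walkSeqs_succ_eq_map {n : ℕ} {u w x : V} (hux : G.Adj u x) :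
    {f ∈ G.walkSeqs (n + 1) u w | f 1 = x} =
      (G.walkSeqs n x w).map ⟨Fin.cons u, Fin.cons_right_injective (α := fun _ => V) u⟩ := by
  ext f
  simp only [walkSeqs, mem_filter, mem_univ, true_and, mem_map, Function.Embedding.coeFn_mk]
  constructor
  · rintro ⟨⟨rfl, hadj, hlast⟩, rfl⟩
    exact ⟨Fin.tail f, ⟨rfl, fun i => hadj i.succ, hlast⟩, Fin.cons_self_tail f⟩
  · rintro ⟨g, ⟨rfl, hadj, hlast⟩, rfl⟩
    refine ⟨⟨rfl, Fin.cases hux fun i => ?_, hlast⟩, rfl⟩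
    simpa only [Fin.cons_succ, ← Fin.succ_castSucc] using hadj i

theorem card_walkSeqs {α : Type*} [Semiring α] (n : ℕ) (u w : V) :
    (#(G.walkSeqs n u w) : α) = (G.adjMatrix α ^ (n + 1)) u w := by
  induction n generalizing u with
  | zero =>
    show _ = (G.adjMatrix α ^ 1) u w
    rw [pow_one, adjMatrix_apply, walkSeqs_zero]
    split_ifs <;> simp
  | succ n ih =>
    rw [pow_succ', adjMatrix_mul_apply, card_eq_sum_card_fiberwise (f := fun f => f 1)
      (t := G.neighborFinset u)]
    · push_cast
      refine sum_congr rfl fun x hx => ?_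
      rw [filter_walkSeqs_succ_eq_map G ((G.mem_neighborFinset u x).1 hx), card_map, ih]
    · intro f hf
      simp only [walkSeqs, coe_filter, mem_univ, true_and, Set.mem_ofPred_eq] at hf
      simpa [← hf.1] using hf.2.1 0

theorem filter_isCyclicWalk_eq_walkSeqs (n : ℕ) (v : V) :
    ({f | G.IsCyclicWalk f ∧ f 0 = v} : Finset (Fin (n + 1) → V)) = G.walkSeqs n v v := by
  unfold walkSeqs
  refine filter_congr fun f _ => ?_
  simp only [IsCyclicWalk, Fin.forall_fin_succ', Fin.coeSucc_eq_succ, Fin.last_add_one]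
  constructor
  · rintro ⟨⟨hadj, hlast⟩, rfl⟩
    exact ⟨rfl, hadj, hlast⟩
  · rintro ⟨rfl, hadj, hlast⟩
    exact ⟨⟨hadj, hlast⟩, rfl⟩

theorem card_isCyclicWalk_apply_zero {α : Type*} [Semiring α] (m : ℕ) [NeZero m] (v : V) :
    (#{f : Fin m → V | G.IsCyclicWalk f ∧ f 0 = v} : α) = (G.adjMatrix α ^ m) v v := by
  obtain ⟨n, rfl⟩ := Nat.exists_eq_add_one_of_ne_zero (NeZero.ne m)
  rw [← card_walkSeqs, ← filter_isCyclicWalk_eq_walkSeqs]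

theorem card_isCyclicWalk {α : Type*} [Semiring α] (m : ℕ) [NeZero m] :
    (#{f : Fin m → V | G.IsCyclicWalk f} : α) = (G.adjMatrix α ^ m).trace := by
  rw [card_eq_sum_card_fiberwise (f := fun f => f 0) (t := univ) (by simp)]
  push_cast
  refine sum_congr rfl fun v _ => ?_
  rw [filter_filter, card_isCyclicWalk_apply_zero, diag_apply]

theorem adjMatrix_pow_apply_nonneg (m : ℕ) (u v : V) : 0 ≤ (G.adjMatrix ℝ ^ m) u v := by
  rw [adjMatrix_pow_apply_eq_card_walk]
  positivity

variable {G} {d : ℕ}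

theorem IsRegularOfDegree.adjMatrix_pow_mulVec_one (hG : G.IsRegularOfDegree d) (k : ℕ) :
    G.adjMatrix ℝ ^ k *ᵥ 1 = (d : ℝ) ^ k • 1 := by
  induction k with
  | zero => simp
  | succ k ih =>
    have h1 : G.adjMatrix ℝ *ᵥ 1 = (d : ℝ) • 1 :=
      funext fun v => by simpa using G.adjMatrix_mulVec_const_apply_of_regular (a := (1 : ℝ)) hG
    rw [pow_succ', ← mulVec_mulVec, ih, mulVec_smul, h1, smul_smul, pow_succ]

theorem IsRegularOfDegree.pow_div_card_le_adjMatrix_pow_apply_self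
    (hG : G.IsRegularOfDegree d) (r : ℕ) (v : V) :
    (d : ℝ) ^ (2 * r) / Fintype.card V ≤ (G.adjMatrix ℝ ^ (2 * r)) v v := by
  have hrow : ∑ u, (G.adjMatrix ℝ ^ r) v u = (d : ℝ) ^ r := by
    simpa [mulVec, dotProduct] using congrFun (hG.adjMatrix_pow_mulVec_one r) v
  have hsq : (G.adjMatrix ℝ ^ (2 * r)) v v = ∑ u, (G.adjMatrix ℝ ^ r) v u ^ 2 := by
    rw [two_mul, pow_add, mul_apply]
    refine sum_congr rfl fun u _ => ?_
    rw [((G.isSymm_adjMatrix).pow r).apply v u, sq]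
  rw [div_le_iff₀ (Nat.cast_pos.2 (Fintype.card_pos_iff.2 ⟨v⟩)), hsq, pow_mul', mul_comm,
    ← hrow]
  simpa using sq_sum_le_card_mul_sum_sq (s := univ) (f := fun u => (G.adjMatrix ℝ ^ r) v u)

theorem IsRegularOfDegree.abs_adjMatrix_pow_odd_apply_self_sub_le_of_le
    (hG : G.IsRegularOfDegree d) (hA : (G.adjMatrix ℝ).IsHermitian) {lam : ℝ}
    (hμ : ∀ i, |hA.eigenvalues i| ≤ lam) (hdl : (d : ℝ) ≤ lam) (r : ℕ) (v : V) :
    |(G.adjMatrix ℝ ^ (2 * r + 1)) v v - (d : ℝ) ^ (2 * r + 1) / Fintype.card V| ≤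
      lam * (G.adjMatrix ℝ ^ (2 * r)) v v := by
  have hodd : (G.adjMatrix ℝ ^ (2 * r + 1)) v v ≤ lam * (G.adjMatrix ℝ ^ (2 * r)) v v := by
    rw [hA.pow_apply_self, hA.pow_apply_self]
    exact (le_abs_self _).trans
      (abs_sum_pow_odd_mul_le _ _ _ (fun i _ => hμ i) (fun i _ => sq_nonneg _) r)
  have htop : (d : ℝ) ^ (2 * r + 1) / Fintype.card V ≤ lam * (G.adjMatrix ℝ ^ (2 * r)) v v := by
    rw [pow_succ', mul_div_assoc]
    exact mul_le_mul hdl (hG.pow_div_card_le_adjMatrix_pow_apply_self r v) (by positivity)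
      ((Nat.cast_nonneg d).trans hdl)
  have hodd₀ := G.adjMatrix_pow_apply_nonneg (2 * r + 1) v v
  have htop₀ : 0 ≤ (d : ℝ) ^ (2 * r + 1) / Fintype.card V := by positivity
  rw [abs_sub_le_iff]
  constructor <;> linarith

end SimpleGraph

namespace gluedCycles

variable {q r : ℕ} {V : Type} (G : SimpleGraph V)

def inl (i : Fin (2 * q)) : Fin (2 * q + 2 * r) := Fin.castAdd (2 * r) i

def glue (f : Fin (2 * q) → V) (g : Fin (2 * r + 1) → V) (x : Fin (2 * q + 2 * r)) : V :=
  if h : x.val < 2 * q then f ⟨x, h⟩ else g ⟨x - 2 * q + 1, by omega⟩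

theorem glue_comp_inl (f : Fin (2 * q) → V) (g : Fin (2 * r + 1) → V) : glue f g ∘ inl = f :=
  funext fun i => dif_pos i.isLt

variable [NeZero q]

theorem embC_injective : Function.Injective (embC q) := by
  have := NeZero.pos q
  intro i j h
  unfold embC at h
  split_ifs at h <;> omega

def inr (i : Fin (2 * r + 1)) : Fin (2 * q + 2 * r) :=
  ⟨embC q i, by have := NeZero.pos q; have := i.isLt; unfold embC; split <;> omega⟩

theorem adj_inl (i : Fin (2 * q)) : (gluedCycles q r).Adj (inl i) (inl (i + 1)) := by
  have := NeZero.pos q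
  refine (fromRel_adj ..).2 ⟨fun h => Fin.ne_add_one (by omega) i (Fin.castAdd_inj.1 h), ?_⟩
  exact Or.inl (Or.inl ⟨i, i.isLt, rfl, Fin.val_add_one_eq_mod i⟩)

theorem adj_inr [NeZero r] (i : Fin (2 * r + 1)) :
    (gluedCycles q r).Adj (inr i) (inr (i + 1)) := by
  have := NeZero.pos r
  refine (fromRel_adj ..).2 ⟨fun h => Fin.ne_add_one (by omega) i ?_, ?_⟩
  · exact Fin.ext (embC_injective (Fin.val_eq_of_eq h))
  · exact Or.inl (Or.inr ⟨i, i.isLt, rfl, congrArg (embC q) (Fin.val_add_one_eq_mod i)⟩)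

theorem map_adj_of_isCyclicWalk {χ : Fin (2 * q + 2 * r) → V} (hl : G.IsCyclicWalk (χ ∘ inl))
    (hr : G.IsCyclicWalk (χ ∘ inr)) {a b : Fin (2 * q + 2 * r)}
    (hab : (gluedCycles q r).Adj a b) : G.Adj (χ a) (χ b) := by
  obtain ⟨-, hab⟩ := (fromRel_adj ..).1 hab
  have step : ∀ a b : Fin (2 * q + 2 * r),
      ((∃ i : ℕ, i < 2 * q ∧ a.val = i ∧ b.val = (i + 1) % (2 * q)) ∨
        (∃ i : ℕ, i < 2 * r + 1 ∧ a.val = embC q i ∧ b.val = embC q ((i + 1) % (2 * r + 1)))) →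
      G.Adj (χ a) (χ b) := by
    rintro a b (⟨i, hi, ha, hb⟩ | ⟨i, hi, ha, hb⟩)
    · obtain rfl : a = inl ⟨i, hi⟩ := Fin.ext ha
      obtain rfl : b = inl (⟨i, hi⟩ + 1) :=
        Fin.ext (hb.trans (Fin.val_add_one_eq_mod (⟨i, hi⟩ : Fin (2 * q))).symm)
      exact hl _
    · obtain rfl : a = inr ⟨i, hi⟩ := Fin.ext ha
      obtain rfl : b = inr (⟨i, hi⟩ + 1) := Fin.ext (hb.trans
        (congrArg (embC q) (Fin.val_add_one_eq_mod (⟨i, hi⟩ : Fin (2 * r + 1))).symm))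
      exact hr _
  exact hab.elim (step a b) fun h => (step b a h).symm

theorem glue_comp_inr {f : Fin (2 * q) → V} {g : Fin (2 * r + 1) → V} (h : f 0 = g 0) :
    glue f g ∘ inr = g := by
  funext i
  rcases eq_or_ne i 0 with rfl | hi
  · exact (dif_pos (NeZero.pos (2 * q))).trans h
  · have hi : i.val ≠ 0 := Fin.val_ne_zero_iff.2 hi
    have hinr : (inr i : Fin (2 * q + 2 * r)).val = 2 * q + i - 1 := if_neg hi
    rw [Function.comp_apply, glue, dif_neg (by omega)]
    exact congrArg g (Fin.ext (by simp only [hinr]; omega))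

theorem glue_comp_inl_comp_inr (χ : Fin (2 * q + 2 * r) → V) :
    glue (χ ∘ inl) (χ ∘ inr) = χ := by
  funext x
  unfold glue
  split_ifs with hx
  · rfl
  · refine congrArg χ (Fin.ext ?_)
    change embC q (x.val - 2 * q + 1) = x.val
    rw [embC, if_neg (by omega)]
    omega

/-- The compatibility `p.1 0 = p.2 0` holds by `rfl`: `inl 0` and `inr 0` are both the
vertex `0`. -/
def homEquiv [NeZero r] : (gluedCycles q r →g G) ≃
    {p : (Fin (2 * q) → V) × (Fin (2 * r + 1) → V) //
      G.IsCyclicWalk p.1 ∧ G.IsCyclicWalk p.2 ∧ p.1 0 = p.2 0} where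
  toFun φ := ⟨(φ ∘ inl, φ ∘ inr), fun i => φ.map_rel (adj_inl i),
    fun i => φ.map_rel (adj_inr i), rfl⟩
  invFun p := ⟨glue p.1.1 p.1.2, map_adj_of_isCyclicWalk G
    (by rw [glue_comp_inl]; exact p.2.1) (by rw [glue_comp_inr p.2.2.2]; exact p.2.2.1)⟩
  left_inv φ := RelHom.ext (congrFun (glue_comp_inl_comp_inr φ))
  right_inv p := Subtype.ext (Prod.ext (glue_comp_inl ..) (glue_comp_inr p.2.2.2))

end gluedCycles

section homCount

variable {V : Type} [Fintype V] [DecidableEq V] (G : SimpleGraph V) [DecidableRel G.Adj]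
  {α : Type*} [Semiring α]

theorem homCount_cycleGraph {m : ℕ} (hm : 2 ≤ m) :
    (homCount (cycleGraph m) G : α) = (G.adjMatrix α ^ m).trace := by
  obtain ⟨n, rfl⟩ := Nat.exists_eq_add_of_le' hm
  rw [homCount, Nat.card_congr (G.cycleGraphHomEquiv n), Nat.card_eq_fintype_card,
    Fintype.card_subtype, card_isCyclicWalk]

theorem homCount_gluedCycles (q r : ℕ) [NeZero q] [NeZero r] :
    (homCount (gluedCycles q r) G : α) =
      ∑ v, (G.adjMatrix α ^ (2 * q)) v v * (G.adjMatrix α ^ (2 * r + 1)) v v := by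
  rw [homCount, Nat.card_congr (gluedCycles.homEquiv G), Nat.card_eq_fintype_card,
    Fintype.card_subtype,
    card_filter_and_eq_sum_mul G.IsCyclicWalk G.IsCyclicWalk (fun f => f 0) (fun g => g 0)]
  push_cast
  simp only [card_isCyclicWalk_apply_zero]

end homCount

namespace IsNDLGraph

variable {V : Type} [Fintype V] [DecidableEq V] {Γ : SimpleGraph V} [DecidableRel Γ.Adj]
  {d : ℕ} {lam : ℝ}

theorem subsingleton_of_neg (hΓ : IsNDLGraph Γ d lam) (hlam : lam < 0) : Subsingleton V := by
  obtain ⟨-, hA, i₀, -, hμ⟩ := hΓ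
  have h : ∀ i, i = i₀ := fun i => by
    by_contra hi
    exact absurd ((abs_nonneg _).trans (hμ i hi)) hlam.not_ge
  exact ⟨fun a b => (h a).trans (h b).symm⟩

theorem abs_adjMatrix_pow_odd_apply_self_sub_le (hΓ : IsNDLGraph Γ d lam) (hlam : 0 ≤ lam)
    (r : ℕ) (v : V) :
    |(Γ.adjMatrix ℝ ^ (2 * r + 1)) v v - (d : ℝ) ^ (2 * r + 1) / Fintype.card V| ≤
      lam * (Γ.adjMatrix ℝ ^ (2 * r)) v v := by
  obtain ⟨hreg, hA, i₀, hd, hμ⟩ := hΓ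
  rcases le_or_gt (d : ℝ) lam with hge | hlt
  · refine hreg.abs_adjMatrix_pow_odd_apply_self_sub_le_of_le hA (fun i => ?_) hge r v
    rcases eq_or_ne i i₀ with rfl | hi
    · rwa [hd, abs_of_nonneg (Nat.cast_nonneg _)]
    · exact hμ i hi
  set μ := hA.eigenvalues
  set w : V → ℝ := fun i => hA.eigenvectorUnitary v i ^ 2
  have hw : ∀ i, 0 ≤ w i := fun _ => sq_nonneg _
  have hspec : ∀ m, (Γ.adjMatrix ℝ ^ m) v v = ∑ i, μ i ^ m * w i := fun m => hA.pow_apply_self m v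
  have hw₀ : w i₀ = (Fintype.card V : ℝ)⁻¹ :=
    hA.eigenvectorUnitary_apply_sq_of_mulVec_one (by simpa using hreg.adjMatrix_pow_mulVec_one 1)
      (fun i hi h => ((abs_le.1 (hμ i hi)).2.trans_lt hlt).ne h) v
  calc _ = |∑ i ∈ univ.erase i₀, μ i ^ (2 * r + 1) * w i| := by
        rw [hspec, ← add_sum_erase _ _ (mem_univ i₀), hd, hw₀, div_eq_mul_inv,
          add_sub_cancel_left]
    _ ≤ lam * ∑ i ∈ univ.erase i₀, μ i ^ (2 * r) * w i :=
        abs_sum_pow_odd_mul_le _ _ _ (fun i hi => hμ i (ne_of_mem_erase hi)) (fun i _ => hw i) r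
    _ ≤ lam * ∑ i, μ i ^ (2 * r) * w i := by
        gcongr
        · exact fun i _ _ => mul_nonneg ((even_two_mul r).pow_nonneg _) (hw i)
        · exact erase_subset _ _
    _ = _ := by rw [hspec]

end IsNDLGraph

/-- The intermediate estimate in the proof of Lemma 2.3: homomorphism count of `C_{2q}` and
`C_{2r+1}` glued at a vertex, compared with `(d^{2r+1}/n)·h_{C_{2q}}(Γ)`. -/
theorem glued_cycles_hom_estimate (V : Type) [Fintype V] [DecidableEq V]
    (Γ : SimpleGraph V) [DecidableRel Γ.Adj] (n d : ℕ) (lam : ℝ)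
    (hn : Fintype.card V = n) (hΓ : IsNDLGraph Γ d lam) (q r : ℕ) (hq : 1 ≤ q) (hr : 1 ≤ r) :
    |(homCount (gluedCycles q r) Γ : ℝ) -
        (d : ℝ) ^ (2 * r + 1) / n * (homCount (cycleGraph (2 * q)) Γ : ℝ)| ≤
      lam * (homCount (cycleGraph (2 * (q + r))) Γ : ℝ) := by
  subst hn
  have : NeZero q := ⟨by omega⟩
  have : NeZero r := ⟨by omega⟩
  rw [homCount_gluedCycles, homCount_cycleGraph Γ (by omega : 2 ≤ 2 * q),
    homCount_cycleGraph Γ (by omega : 2 ≤ 2 * (q + r)), trace, trace]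
  rcases le_or_gt 0 lam with hlam | hlam
  · refine abs_sum_mul_sub_mul_sum_le univ hlam
      (fun v _ => Γ.adjMatrix_pow_apply_nonneg _ v v)
      (fun v _ => hΓ.abs_adjMatrix_pow_odd_apply_self_sub_le hlam r v) fun v _ => ?_
    rw [mul_add, pow_add]
    exact apply_self_mul_apply_self_le (Γ.adjMatrix_pow_apply_nonneg _)
      (Γ.adjMatrix_pow_apply_nonneg _) v
  · have := hΓ.subsingleton_of_neg hlam
    have hA : Γ.adjMatrix ℝ = 0 := by
      ext a b
      simp [adjMatrix_apply, Subsingleton.elim a b]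
    simp [hA, zero_pow (by omega : 2 * q ≠ 0), zero_pow (by omega : 2 * (q + r) ≠ 0)]
end

section
/- Let X be a finite nonempty set, let γ : X² → {0,1} be symmetric, let f : X² → ℝ be symmetric with |f(x,y)| ≤ γ(x,y) for all x, y ∈ X, let k ≥ 1 be an integer, let p > 0, and let 0 < z ≤ 1. Define T₀ = T₁ = 0 and, for 2 ≤ m ≤ 2k, T_m := (pz)^{2k−m} · Σ_J E[⟨f, zγ⟩_{P_m}^J], where P_m is the path with vertices 1,…,m+1 and edges {i,i+1}, and the sum runs over all J ⊆ E(P_m) with |J| even that contain both the edge {1,2} and the edge {m,m+1}. Then for every ℓ with 1 ≤ ℓ ≤ k, T_{2ℓ} + 2·T_{2ℓ−1} + T_{2ℓ−2} ≥ 0. -/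
open Finset

/-- `E[⟨f₁,f₂⟩_{P_m}^J]` for the path `P_m` with vertices `1,…,m+1` and edges `{i,i+1}`:
the expectation, over independent uniform random `x : Fin (m+1) → X`, of the product of
`f₁` over the edges indexed by `J` and of `f₂` over the remaining edges. -/
noncomputable def pathMoment {X : Type} [Fintype X] (m : ℕ) (J : Finset (Fin m))
    (f₁ f₂ : X → X → ℝ) : ℝ :=
  (∑ x : Fin (m + 1) → X, ∏ i : Fin m,
      (if i ∈ J then f₁ (x i.castSucc) (x i.succ) else f₂ (x i.castSucc) (x i.succ))) /
    (Fintype.card X : ℝ) ^ (m + 1)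

/-!
Let `F`, `G` be the averaging matrices `N⁻¹ f`, `N⁻¹ zγ` (`N = |X|`) and `u = F 1`. Restricting
to even `J` averages the full expansion over `J ⊇ {first, last edge}` with its `(-1)^|J|`-signed
version, and a sum over paths is a matrix product, so `Σ_J E[⟨f, zγ⟩_{P_m}^J]` equals
`(2N)⁻¹ (u ⬝ (F + G)^(m-2) u + u ⬝ (G - F)^(m-2) u)`. Both `H = F + G` and `H = G - F` are
symmetric, so with `c = pz` and `ℓ ≥ 2` the combination `T_{2ℓ} + 2T_{2ℓ-1} + T_{2ℓ-2}` is
`c^(2(k-ℓ)) (2N)⁻¹ Σ_H |H^(ℓ-1) u + c H^(ℓ-2) u|²`, while for `ℓ = 1` it is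
`T_2 = c^(2k-2) N⁻¹ |u|²`.
-/

open Matrix

section EvenSubsets

variable {ι R : Type*} [Fintype ι] [DecidableEq ι]

theorem prod_ite_mem_eq_prod_mul_prod_compl [CommMonoid R] (J : Finset ι) (a b : ι → R) :
    ∏ i, (if i ∈ J then a i else b i) = (∏ i ∈ J, a i) * ∏ i ∈ Jᶜ, b i := by
  rw [prod_ite, filter_mem_eq_inter, ← sdiff_eq_filter, univ_inter, compl_eq_univ_sdiff]

theorem sum_superset_prod_ite [CommSemiring R] (S : Finset ι) (a b : ι → R) :
    ∑ J ∈ univ.filter (S ⊆ ·), ∏ i, (if i ∈ J then a i else b i) =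
      ∏ i, (if i ∈ S then a i else a i + b i) := by
  have hsplit : ∀ i, (if i ∈ S then a i else a i + b i) = a i + if i ∈ S then 0 else b i := by
    intro i; split_ifs <;> simp
  rw [Fintype.prod_congr _ _ hsplit, Fintype.prod_add, sum_filter]
  refine sum_congr rfl fun J _ => ?_
  rw [prod_ite_mem_eq_prod_mul_prod_compl]
  split_ifs with hSJ
  · congr 1
    exact prod_congr rfl fun i hi => (if_neg fun hiS => mem_compl.1 hi (hSJ hiS)).symm
  · obtain ⟨i, hiS, hiJ⟩ := not_subset.1 hSJ
    rw [prod_eq_zero (mem_compl.2 hiJ) (by simp [hiS]), mul_zero]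

theorem prod_ite_mem_neg [CommRing R] (J : Finset ι) (a b : ι → R) :
    ∏ i, (if i ∈ J then -a i else b i) = (-1) ^ J.card * ∏ i, (if i ∈ J then a i else b i) := by
  simp only [prod_ite_mem_eq_prod_mul_prod_compl, prod_neg, mul_assoc]

theorem two_mul_sum_even_superset_prod_ite [CommRing R] (S : Finset ι) (hS : Even S.card)
    (a b : ι → R) :
    2 * ∑ J ∈ univ.filter (fun J => S ⊆ J ∧ Even J.card), ∏ i, (if i ∈ J then a i else b i) =
      ∏ i, (if i ∈ S then a i else a i + b i) + ∏ i, (if i ∈ S then a i else b i - a i) := by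
  have hsigned := sum_superset_prod_ite S (fun i => -a i) b
  simp only [prod_ite_mem_neg, hS.neg_one_pow, one_mul, neg_add_eq_sub] at hsigned
  rw [← sum_superset_prod_ite, ← hsigned, ← sum_add_distrib, ← filter_filter, mul_sum, sum_filter]
  refine sum_congr rfl fun J _ => ?_
  rcases Nat.even_or_odd J.card with h | h
  · rw [if_pos h, h.neg_one_pow]; ring
  · rw [if_neg (Nat.not_even_iff_odd.2 h), h.neg_one_pow]; ring

end EvenSubsets

section PathSums

variable {X R : Type*} [Fintype X] [DecidableEq X] [CommSemiring R]

theorem sum_mul_prod_path_eq_dotProduct (m : ℕ) (K : Fin m → Matrix X X R) (w : X → R) :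
    ∑ x : Fin (m + 1) → X, w (x 0) * ∏ i, K i (x i.castSucc) (x i.succ) =
      w ⬝ᵥ ((List.ofFn K).prod *ᵥ 1) := by
  induction m generalizing w with
  | zero =>
    rw [← (Equiv.funUnique (Fin 1) X).symm.sum_comp]
    simp [dotProduct]
  | succ m ih =>
    rw [List.ofFn_succ, List.prod_cons, ← mulVec_mulVec, dotProduct_mulVec, ← ih,
      ← (Fin.consEquiv fun _ => X).sum_comp, Fintype.sum_prod_type, sum_comm]
    simp only [Fin.consEquiv_apply, Fin.prod_univ_succ, Fin.cons_zero, Fin.cons_succ,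
      Fin.castSucc_zero, ← Fin.succ_castSucc, vecMul, dotProduct, sum_mul, mul_assoc]

theorem prod_ofFn_ite_ends {M : Type*} [Monoid M] (x y : M) (e : ℕ) :
    (List.ofFn fun i : Fin (e + 2) =>
      if i ∈ ({0, Fin.last (e + 1)} : Finset _) then x else y).prod = x * y ^ e * x := by
  rw [List.ofFn_succ, List.ofFn_succ']
  simp [Fin.ext_iff, (Fin.is_lt _).ne, mul_assoc]

theorem sum_prod_path_ends (F H : Matrix X X R) (hF : Fᵀ = F) (e : ℕ) :
    ∑ x : Fin (e + 3) → X, ∏ i : Fin (e + 2),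
      (if i ∈ ({0, Fin.last (e + 1)} : Finset _) then F else H) (x i.castSucc) (x i.succ) =
        (F *ᵥ 1) ⬝ᵥ (H ^ e *ᵥ (F *ᵥ 1)) := by
  have h := sum_mul_prod_path_eq_dotProduct (e + 2)
    (fun i => if i ∈ ({0, Fin.last (e + 1)} : Finset _) then F else H) 1
  simp only [Pi.one_apply, one_mul] at h
  rw [h, prod_ofFn_ite_ends, ← mulVec_mulVec, ← mulVec_mulVec, dotProduct_mulVec, ← hF,
    vecMul_transpose, hF]

end PathSums

section SymmetricForms

variable {n : Type*} [Fintype n] [DecidableEq n]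

theorem pow_mulVec_dotProduct_pow_mulVec {R : Type*} [CommSemiring R] {H : Matrix n n R}
    (hH : Hᵀ = H) (v : n → R) (a b : ℕ) :
    (H ^ a *ᵥ v) ⬝ᵥ (H ^ b *ᵥ v) = v ⬝ᵥ (H ^ (a + b) *ᵥ v) := by
  conv_lhs => rw [← hH, ← transpose_pow, mulVec_transpose, ← dotProduct_mulVec, hH]
  rw [mulVec_mulVec, pow_add]

theorem dotProduct_pow_mulVec_nonneg {H : Matrix n n ℝ} (hH : Hᵀ = H) (v : n → ℝ) (e : ℕ) :
    0 ≤ v ⬝ᵥ (H ^ (2 * e) *ᵥ v) := by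
  rw [two_mul, ← pow_mulVec_dotProduct_pow_mulVec hH]
  simpa using dotProduct_star_self_nonneg (H ^ e *ᵥ v)

theorem dotProduct_pow_mulVec_add_nonneg {H : Matrix n n ℝ} (hH : Hᵀ = H) (v : n → ℝ) (c : ℝ)
    (e : ℕ) :
    0 ≤ v ⬝ᵥ (H ^ (2 * e + 2) *ᵥ v) + 2 * c * v ⬝ᵥ (H ^ (2 * e + 1) *ᵥ v)
      + c ^ 2 * v ⬝ᵥ (H ^ (2 * e) *ᵥ v) := by
  set w := H ^ (e + 1) *ᵥ v + c • H ^ e *ᵥ v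
  have hw : w ⬝ᵥ w = v ⬝ᵥ (H ^ (2 * e + 2) *ᵥ v) + 2 * c * v ⬝ᵥ (H ^ (2 * e + 1) *ᵥ v)
      + c ^ 2 * v ⬝ᵥ (H ^ (2 * e) *ᵥ v) := by
    simp only [w, add_dotProduct, dotProduct_add, smul_dotProduct, dotProduct_smul,
      pow_mulVec_dotProduct_pow_mulVec hH, smul_eq_mul]
    rw [show e + 1 + (e + 1) = 2 * e + 2 by ring, show e + 1 + e = 2 * e + 1 by ring,
      show e + (e + 1) = 2 * e + 1 by ring, ← two_mul]
    ring
  rw [← hw]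
  simpa using dotProduct_star_self_nonneg w

end SymmetricForms

section PathMoments

variable {X : Type} [Fintype X]

noncomputable def averagingMatrix (h : X → X → ℝ) : Matrix X X ℝ :=
  (Fintype.card X : ℝ)⁻¹ • Matrix.of h

theorem averagingMatrix_transpose {h : X → X → ℝ} (hh : ∀ a b, h a b = h b a) :
    (averagingMatrix h)ᵀ = averagingMatrix h := by
  ext a b
  simp [averagingMatrix, hh a b]

theorem pathMoment_eq {m : ℕ} (J : Finset (Fin m)) (f₁ f₂ : X → X → ℝ) :
    pathMoment m J f₁ f₂ = (Fintype.card X : ℝ)⁻¹ * ∑ x : Fin (m + 1) → X, ∏ i,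
      (if i ∈ J then averagingMatrix f₁ else averagingMatrix f₂) (x i.castSucc) (x i.succ) := by
  rw [pathMoment, div_eq_mul_inv, sum_mul, mul_sum]
  refine sum_congr rfl fun x _ => ?_
  simp only [Matrix.ite_apply, averagingMatrix, Matrix.smul_apply, of_apply, smul_eq_mul, ← mul_ite,
    prod_mul_distrib, prod_const, card_univ, Fintype.card_fin, inv_pow]
  ring

theorem sum_filter_even_pathMoment [DecidableEq X] (f g : X → X → ℝ)
    (hf : ∀ a b, f a b = f b a) (m : ℕ) (hm : 2 ≤ m) :
    ∑ J ∈ (univ : Finset (Finset (Fin m))).filter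
        (fun J => Even J.card ∧ (⟨0, by omega⟩ : Fin m) ∈ J ∧ (⟨m - 1, by omega⟩ : Fin m) ∈ J),
      pathMoment m J f g =
    (Fintype.card X : ℝ)⁻¹ / 2 *
      ((averagingMatrix f *ᵥ 1) ⬝ᵥ
          ((averagingMatrix f + averagingMatrix g) ^ (m - 2) *ᵥ (averagingMatrix f *ᵥ 1)) +
        (averagingMatrix f *ᵥ 1) ⬝ᵥ
          ((averagingMatrix g - averagingMatrix f) ^ (m - 2) *ᵥ (averagingMatrix f *ᵥ 1))) := by
  obtain ⟨e, rfl⟩ : ∃ e, m = e + 2 := ⟨m - 2, by omega⟩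
  set F := averagingMatrix f
  set G := averagingMatrix g
  set S : Finset (Fin (e + 2)) := {0, Fin.last (e + 1)}
  have hS : Even S.card := by rw [card_pair (by simp [Fin.ext_iff])]; exact even_two
  have hfilter : univ.filter (fun J : Finset (Fin (e + 2)) =>
      Even J.card ∧ (⟨0, by omega⟩ : Fin (e + 2)) ∈ J ∧ (⟨e + 2 - 1, by omega⟩ : Fin (e + 2)) ∈ J) =
      univ.filter (fun J => S ⊆ J ∧ Even J.card) := by
    ext J
    simp only [mem_filter, mem_univ, true_and, S, insert_subset_iff, singleton_subset_iff]
    exact ⟨fun ⟨h, h0, h1⟩ => ⟨⟨h0, h1⟩, h⟩, fun ⟨⟨h0, h1⟩, h⟩ => ⟨h, h0, h1⟩⟩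
  calc _ = (Fintype.card X : ℝ)⁻¹ * ∑ x : Fin (e + 3) → X,
        ∑ J ∈ univ.filter (fun J => S ⊆ J ∧ Even J.card),
          ∏ i, (if i ∈ J then F (x i.castSucc) (x i.succ) else G (x i.castSucc) (x i.succ)) := by
        simp only [hfilter, pathMoment_eq, ← mul_sum, Matrix.ite_apply]
        rw [sum_comm]
    _ = (Fintype.card X : ℝ)⁻¹ * ∑ x : Fin (e + 3) → X,
        (∏ i, (if i ∈ S then F else F + G) (x i.castSucc) (x i.succ) +
          ∏ i, (if i ∈ S then F else G - F) (x i.castSucc) (x i.succ)) / 2 := by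
        congr 1
        refine sum_congr rfl fun x _ => ?_
        rw [eq_div_iff two_ne_zero, mul_comm, two_mul_sum_even_superset_prod_ite S hS]
        simp only [Matrix.ite_apply, Matrix.add_apply, Matrix.sub_apply]
    _ = _ := by
        rw [← sum_div, sum_add_distrib, sum_prod_path_ends F _ (averagingMatrix_transpose hf),
          sum_prod_path_ends F _ (averagingMatrix_transpose hf), Nat.add_sub_cancel]
        ring

end PathMoments

theorem add_two_mul_add_nonneg_of_eq_pow_mul (T q : ℕ → ℝ) (c : ℝ) (k : ℕ)
    (hT0 : T 0 = 0) (hT1 : T 1 = 0)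
    (hT : ∀ m, 2 ≤ m → m ≤ 2 * k → T m = c ^ (2 * k - m) * q (m - 2))
    (hq0 : 0 ≤ q 0) (hq : ∀ e, 0 ≤ q (2 * e + 2) + 2 * c * q (2 * e + 1) + c ^ 2 * q (2 * e))
    (ℓ : ℕ) (hℓ : 1 ≤ ℓ) (hℓk : ℓ ≤ k) :
    0 ≤ T (2 * ℓ) + 2 * T (2 * ℓ - 1) + T (2 * ℓ - 2) := by
  obtain ⟨j, rfl⟩ : ∃ j, k = ℓ + j := ⟨k - ℓ, by omega⟩
  have hT' : ∀ n i, n + i = 2 * ℓ - 2 → T (n + 2) = c ^ (2 * j + i) * q n := fun n i h => by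
    rw [hT _ (by omega) (by omega), show 2 * (ℓ + j) - (n + 2) = 2 * j + i by omega,
      Nat.add_sub_cancel]
  obtain rfl | ⟨e, rfl⟩ : ℓ = 1 ∨ ∃ e, ℓ = e + 2 := by rcases ℓ with _ | _ | e <;> simp_all
  · rw [hT' 0 0 rfl, hT1, hT0]
    simpa using mul_nonneg ((even_two_mul j).pow_nonneg c) hq0
  · rw [show 2 * (e + 2) - 1 = 2 * e + 1 + 2 by omega, show 2 * (e + 2) - 2 = 2 * e + 2 by omega,
      show 2 * (e + 2) = 2 * e + 2 + 2 by ring, hT' _ 0 (by omega), hT' _ 1 (by omega),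
      hT' _ 2 (by omega)]
    calc 0 ≤ c ^ (2 * j) * (q (2 * e + 2) + 2 * c * q (2 * e + 1) + c ^ 2 * q (2 * e)) :=
          mul_nonneg ((even_two_mul j).pow_nonneg c) (hq e)
      _ = _ := by ring

/-- The claim inside the proof of Lemma 3.4: `T_{2ℓ} + 2T_{2ℓ-1} + T_{2ℓ-2} ≥ 0`. -/
theorem T_triple_sum_nonneg (X : Type) [Fintype X] (γ f : X → X → ℝ)
    (hγs : ∀ a b, γ a b = γ b a)
    (hfs : ∀ a b, f a b = f b a)
    (k : ℕ) (p z : ℝ)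
    (T : ℕ → ℝ) (hT0 : T 0 = 0) (hT1 : T 1 = 0)
    (hTm : ∀ m, ∀ _ : 2 ≤ m, ∀ _ : m ≤ 2 * k,
      T m = (p * z) ^ (2 * k - m) *
        ∑ J ∈ (Finset.univ : Finset (Finset (Fin m))).filter
            (fun J => Even J.card ∧ (⟨0, by omega⟩ : Fin m) ∈ J ∧ (⟨m - 1, by omega⟩ : Fin m) ∈ J),
          pathMoment m J f (fun a b => z * γ a b)) :
    ∀ ℓ, 1 ≤ ℓ → ℓ ≤ k → 0 ≤ T (2 * ℓ) + 2 * T (2 * ℓ - 1) + T (2 * ℓ - 2) := by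
  classical
  set F := averagingMatrix f
  set G := averagingMatrix fun a b => z * γ a b
  have hF : Fᵀ = F := averagingMatrix_transpose hfs
  have hG : Gᵀ = G := averagingMatrix_transpose fun a b => by rw [hγs]
  have hA : (F + G)ᵀ = F + G := by rw [transpose_add, hF, hG]
  have hB : (G - F)ᵀ = G - F := by rw [transpose_sub, hF, hG]
  have hN : 0 ≤ (Fintype.card X : ℝ)⁻¹ / 2 := by positivity
  set u := F *ᵥ 1
  refine add_two_mul_add_nonneg_of_eq_pow_mul T
    (fun n => (Fintype.card X : ℝ)⁻¹ / 2 * (u ⬝ᵥ ((F + G) ^ n *ᵥ u) + u ⬝ᵥ ((G - F) ^ n *ᵥ u)))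
    (p * z) k hT0 hT1
    (fun m hm hmk => by rw [hTm m hm hmk, sum_filter_even_pathMoment f _ hfs m hm]) ?_ fun e => ?_
  · simpa using mul_nonneg hN (add_nonneg (dotProduct_pow_mulVec_nonneg hA u 0)
      (dotProduct_pow_mulVec_nonneg hB u 0))
  · calc 0 ≤ (Fintype.card X : ℝ)⁻¹ / 2 *
          ((_ + 2 * (p * z) * _ + (p * z) ^ 2 * _) + (_ + 2 * (p * z) * _ + (p * z) ^ 2 * _)) :=
        mul_nonneg hN (add_nonneg (dotProduct_pow_mulVec_add_nonneg hA u (p * z) e)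
          (dotProduct_pow_mulVec_add_nonneg hB u (p * z) e))
      _ = _ := by ring
end
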